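/- arXiv:2010.11243 — 2 statements merged into one kernel-verified Lean document; each statement's English description precedes it below -/
import Mathlib

section
/- Let G be a one-sided POSG, Γ a nonempty convex set of linear functions on Δ(S) such that V(b) = sup_{α ∈ Γ} α(b) is finite for every b ∈ Δ(S), and b ∈ Δ(S). Then sup_{π1 ∈ Π1} sup_{ᾱ ∈ Γ^{A1×O}} valcomp(π1, ᾱ)(b) = sup_{π1 ∈ Π1} inf_{π2 ∈ Π2} u^{V,b}(π1, π2). -/
open scoped BigOperators

noncomputable section

/-- ℓ1 distance on `S → ℝ`. -/
def l1dist {S : Type*} [Fintype S] (p q : S → ℝ) : ℝ := ∑ s, |p s - q s|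

/-- Evaluation at a belief `b` of the linear function on the simplex with vertex values
`α : S → ℝ`. -/
def lineval {S : Type*} [Fintype S] (α : S → ℝ) (b : S → ℝ) : ℝ := ∑ s, b s * α s

/-- `f` is `k`-Lipschitz with respect to the ℓ1 metric on the probability simplex. -/
def LipOnSimplex {S : Type*} [Fintype S] (k : ℝ) (f : (S → ℝ) → ℝ) : Prop :=
  ∀ p ∈ stdSimplex ℝ S, ∀ q ∈ stdSimplex ℝ S, |f p - f q| ≤ k * l1dist p q

/-- A one-sided partially observable stochastic game. -/
structure OSPOSG (S A1 A2 O : Type*) [Fintype S] [Fintype A1] [Fintype A2] [Fintype O] where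
  /-- transition function: `T s a1 a2 o s'` is the probability of observing `o` and moving
  to `s'` from `s` under actions `a1, a2`. -/
  T : S → A1 → A2 → O → S → ℝ
  T_nonneg : ∀ s a1 a2 o s', 0 ≤ T s a1 a2 o s'
  T_sum : ∀ s a1 a2, ∑ o, ∑ s', T s a1 a2 o s' = 1
  /-- reward function of player 1 -/
  R : S → A1 → A2 → ℝ
  /-- discount factor -/
  γ : ℝ
  γ_pos : 0 < γ
  γ_lt_one : γ < 1

namespace OSPOSG

variable {S A1 A2 O : Type*} [Fintype S] [Fintype A1] [Fintype A2] [Fintype O]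
  [Nonempty S] [Nonempty A1] [Nonempty A2] [Nonempty O]

/-- The minimum reward `r_min`. -/
def rmin (G : OSPOSG S A1 A2 O) : ℝ :=
  Finset.univ.inf' Finset.univ_nonempty fun x : S × A1 × A2 => G.R x.1 x.2.1 x.2.2

/-- The maximum reward `r_max`. -/
def rmax (G : OSPOSG S A1 A2 O) : ℝ :=
  Finset.univ.sup' Finset.univ_nonempty fun x : S × A1 × A2 => G.R x.1 x.2.1 x.2.2

/-- `L = r_min / (1 - γ)`. -/
def Lval (G : OSPOSG S A1 A2 O) : ℝ := G.rmin / (1 - G.γ)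

/-- `U = r_max / (1 - γ)`. -/
def Uval (G : OSPOSG S A1 A2 O) : ℝ := G.rmax / (1 - G.γ)

/-- `δ = (U - L) / 2`. -/
def δval (G : OSPOSG S A1 A2 O) : ℝ := (G.Uval - G.Lval) / 2

/-- The set of stage strategies of player 2. -/
def Pi2 (S A2 : Type*) [Fintype A2] : Set (S → A2 → ℝ) :=
  {π2 | ∀ s, π2 s ∈ stdSimplex ℝ A2}

/-- Vertex values of the value composition `valcomp(π1, ᾱ)`. -/
def valcompVert (G : OSPOSG S A1 A2 O) (π1 : A1 → ℝ) (αb : A1 → O → S → ℝ) (s : S) : ℝ :=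
  Finset.univ.inf' Finset.univ_nonempty fun a2 =>
    ∑ a1, π1 a1 * (G.R s a1 a2 + G.γ * ∑ o, ∑ s', G.T s a1 a2 o s' * αb a1 o s')

/-- The value composition `valcomp(π1, ᾱ)`, a linear function of the belief `b`. -/
def valcomp (G : OSPOSG S A1 A2 O) (π1 : A1 → ℝ) (αb : A1 → O → S → ℝ) (b : S → ℝ) : ℝ :=
  ∑ s, b s * G.valcompVert π1 αb s

/-- `Pr_{b,π1,π2}[a1, o]`: the probability that player 1 plays `a1` and observes `o`. -/
def Pr (G : OSPOSG S A1 A2 O) (b : S → ℝ) (π1 : A1 → ℝ) (π2 : S → A2 → ℝ)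
    (a1 : A1) (o : O) : ℝ :=
  ∑ s, ∑ a2, ∑ s', b s * π1 a1 * π2 s a2 * G.T s a1 a2 o s'

/-- The updated belief `τ(b, a1, π2, o)` of player 1 (junk value `0` if the normalizing
constant vanishes; such terms are always multiplied by a zero probability below). -/
def beliefUpd (G : OSPOSG S A1 A2 O) (b : S → ℝ) (a1 : A1) (π2 : S → A2 → ℝ) (o : O) :
    S → ℝ := fun s' =>
  (∑ s, ∑ a2, b s * π2 s a2 * G.T s a1 a2 o s') /
    (∑ s'', ∑ s, ∑ a2, b s * π2 s a2 * G.T s a1 a2 o s'')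

/-- The stage utility `u^{V,b}(π1, π2)`. -/
def stageU (G : OSPOSG S A1 A2 O) (V : (S → ℝ) → ℝ) (b : S → ℝ)
    (π1 : A1 → ℝ) (π2 : S → A2 → ℝ) : ℝ :=
  (∑ s, ∑ a1, ∑ a2, b s * π1 a1 * π2 s a2 * G.R s a1 a2) +
    G.γ * ∑ a1, ∑ o, G.Pr b π1 π2 a1 o * V (G.beliefUpd b a1 π2 o)

/-- The minimax (Bellman) operator `[HV](b) = sup_{π1} inf_{π2} u^{V,b}(π1,π2)`. -/
def Hop (G : OSPOSG S A1 A2 O) (V : (S → ℝ) → ℝ) (b : S → ℝ) : ℝ :=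
  ⨆ π1 : stdSimplex ℝ A1, ⨅ π2 : Pi2 S A2, G.stageU V b π1.1 π2.1

end OSPOSG

/-!
Fix `π1`. The payoff `composedPayoff` of `π2` against linear continuation values
`ᾱ ∈ Γ^{A1×O}` is affine in `ᾱ` and linear in `π2`. Its infimum over `π2` is `valcomp(π1, ᾱ)(b)`,
attained at a pure strategy. Its supremum over `ᾱ` is `u^{V,b}(π1, π2)`: the continuation splits
into independent `(a1, o)`-summands, and since `V` is the upper envelope of `Γ`,
`sup_{α ∈ Γ} α(N) = ‖N‖₁ V(N / ‖N‖₁)` for the unnormalised updated belief `N`. Sion's minimax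
theorem (`Π2` is compact and convex, `Γ^{A1×O}` convex) exchanges `inf_{π2}` and `sup_ᾱ`, and
taking `sup_{π1}` gives the claim; both sides are finite because `Γ` is bounded above at the
vertices of the simplex.
-/

open Finset Set

open scoped Pointwise in
theorem isLUB_finsetSum {ι G : Type*} [AddCommGroup G] [PartialOrder G] [IsOrderedAddMonoid G]
    {t : Finset ι} {s : ι → Set G} {a : ι → G} (h : ∀ i ∈ t, IsLUB (s i) (a i)) :
    IsLUB (∑ i ∈ t, s i) (∑ i ∈ t, a i) := by
  classical
  induction t using Finset.induction_on with
  | empty =>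
    rw [Finset.sum_empty, Finset.sum_empty, ← Set.singleton_zero]
    exact isLUB_singleton
  | insert i t hi ih =>
    rw [Finset.sum_insert hi, Finset.sum_insert hi]
    exact (h i (mem_insert_self i t)).add (ih fun j hj => h j (mem_insert_of_mem hj))

open scoped Pointwise in
theorem isLUB_image_sum_univ_pi {ι G : Type*} {κ : ι → Type*} [Fintype ι] [AddCommGroup G]
    [PartialOrder G] [IsOrderedAddMonoid G] {t : ∀ i, Set (κ i)} {g : ∀ i, κ i → G} {c : ι → G}
    (h : ∀ i, IsLUB (g i '' t i) (c i)) :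
    IsLUB ((fun x => ∑ i, g i (x i)) '' univ.pi t) (∑ i, c i) := by
  have hset : (fun x => ∑ i, g i (x i)) '' univ.pi t = ∑ i, g i '' t i := by
    rw [← Set.image_fintype_sum_pi, ← Set.piMap_image_univ_pi, Set.image_image]
    rfl
  rw [hset]
  exact isLUB_finsetSum fun i _ => h i

section Simplex

variable {S : Type*} [Fintype S]

theorem lineval_smul (α : S → ℝ) (c : ℝ) (β : S → ℝ) : lineval α (c • β) = c * lineval α β := by
  simp [lineval, Finset.mul_sum, mul_assoc]

theorem lineval_single [DecidableEq S] (α : S → ℝ) (s : S) : lineval α (Pi.single s 1) = α s := by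
  simp [lineval, Pi.single_apply]

theorem exists_forall_apply_le_of_bddAbove_lineval {Γ : Set (S → ℝ)}
    (hbdd : ∀ b ∈ stdSimplex ℝ S, BddAbove ((fun α => lineval α b) '' Γ)) :
    ∃ C, ∀ α ∈ Γ, ∀ s, α s ≤ C := by
  classical
  choose C hC using fun s => hbdd _ (single_mem_stdSimplex ℝ s)
  obtain ⟨M, hM⟩ := (Set.finite_range C).bddAbove
  refine ⟨M, fun α hα s => ?_⟩
  calc α s = lineval α (Pi.single s 1) := (lineval_single α s).symm
    _ ≤ C s := hC s ⟨α, hα, rfl⟩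
    _ ≤ M := hM ⟨s, rfl⟩

theorem isLUB_image_lineval {Γ : Set (S → ℝ)} (hne : Γ.Nonempty)
    (hbdd : ∀ b ∈ stdSimplex ℝ S, BddAbove ((fun α => lineval α b) '' Γ))
    {V : (S → ℝ) → ℝ} (hV : ∀ b ∈ stdSimplex ℝ S, V b = sSup ((fun α => lineval α b) '' Γ))
    {N : S → ℝ} (hN : 0 ≤ N) :
    IsLUB ((fun α => lineval α N) '' Γ) ((∑ s, N s) * V ((∑ s, N s)⁻¹ • N)) := by
  rcases (Finset.sum_nonneg fun s _ => hN s : 0 ≤ ∑ s, N s).eq_or_lt with hm | hm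
  · have hN0 : N = 0 := funext fun s =>
      (Finset.sum_eq_zero_iff_of_nonneg fun s _ => hN s).1 hm.symm s (mem_univ s)
    have himage : (fun α => lineval α N) '' Γ = {0} := by
      simp [hN0, lineval, hne.image_const]
    rw [himage, ← hm, zero_mul]
    exact isLUB_singleton
  · have hτ : (∑ s, N s)⁻¹ • N ∈ stdSimplex ℝ S :=
      ⟨fun s => smul_nonneg (inv_nonneg.2 hm.le) (hN s), by
        simp [← Finset.mul_sum, inv_mul_cancel₀ hm.ne']⟩
    have hlub := (isLUB_csSup (hne.image _) (hbdd _ hτ)).mul_left hm.le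
    rw [← hV _ hτ, Set.image_image] at hlub
    simpa [lineval_smul, mul_inv_cancel_left₀ hm.ne'] using hlub

end Simplex

namespace OSPOSG

section StageStrategies

variable {S A2 : Type*} [Fintype A2]

theorem Pi2_eq_univ_pi : Pi2 S A2 = univ.pi fun _ => stdSimplex ℝ A2 := by
  ext; simp [Pi2]

theorem isCompact_Pi2 : IsCompact (Pi2 S A2) := by
  rw [Pi2_eq_univ_pi]
  exact isCompact_univ_pi fun _ => isCompact_stdSimplex ℝ A2

theorem convex_Pi2 : Convex ℝ (Pi2 S A2) := by
  rw [Pi2_eq_univ_pi]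
  exact convex_pi fun _ _ => convex_stdSimplex ℝ A2

theorem nonempty_Pi2 [Nonempty A2] : (Pi2 S A2).Nonempty := by
  rw [Pi2_eq_univ_pi]
  exact univ_pi_nonempty_iff.2 fun _ => ⟨_, (Classical.arbitrary (stdSimplex ℝ A2)).2⟩

end StageStrategies

variable {S A1 A2 O : Type*} [Fintype S] [Fintype A1] [Fintype A2] [Fintype O]
  (G : OSPOSG S A1 A2 O) {b : S → ℝ} {π1 : A1 → ℝ} {π2 : S → A2 → ℝ}

def unnormBeliefUpd (b : S → ℝ) (π2 : S → A2 → ℝ) (a1 : A1) (o : O) : S → ℝ := fun s' =>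
  ∑ s, ∑ a2, b s * π2 s a2 * G.T s a1 a2 o s'

theorem unnormBeliefUpd_nonneg (hb : 0 ≤ b) (hπ2 : 0 ≤ π2) (a1 : A1) (o : O) :
    0 ≤ G.unnormBeliefUpd b π2 a1 o := fun s' =>
  Finset.sum_nonneg fun s _ => Finset.sum_nonneg fun a2 _ =>
    mul_nonneg (mul_nonneg (hb s) (hπ2 s a2)) (G.T_nonneg s a1 a2 o s')

theorem beliefUpd_eq_smul (a1 : A1) (o : O) :
    G.beliefUpd b a1 π2 o =
      (∑ s', G.unnormBeliefUpd b π2 a1 o s')⁻¹ • G.unnormBeliefUpd b π2 a1 o := by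
  ext s'
  simp [beliefUpd, unnormBeliefUpd, div_eq_inv_mul]

theorem Pr_eq_mul_sum_unnormBeliefUpd (a1 : A1) (o : O) :
    G.Pr b π1 π2 a1 o = π1 a1 * ∑ s', G.unnormBeliefUpd b π2 a1 o s' := by
  simp only [Pr, unnormBeliefUpd, Finset.mul_sum]
  conv_rhs => rw [Finset.sum_comm]
  refine Finset.sum_congr rfl fun s _ => ?_
  rw [Finset.sum_comm]
  exact Finset.sum_congr rfl fun a2 _ => Finset.sum_congr rfl fun s' _ => by ring

def actionValue (π1 : A1 → ℝ) (αb : A1 → O → S → ℝ) (s : S) (a2 : A2) : ℝ :=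
  ∑ a1, π1 a1 * (G.R s a1 a2 + G.γ * ∑ o, ∑ s', G.T s a1 a2 o s' * αb a1 o s')

def composedPayoff (b : S → ℝ) (π1 : A1 → ℝ) (π2 : S → A2 → ℝ) (αb : A1 → O → S → ℝ) : ℝ :=
  ∑ s, b s * ∑ a2, π2 s a2 * G.actionValue π1 αb s a2

theorem composedPayoff_eq (αb : A1 → O → S → ℝ) :
    G.composedPayoff b π1 π2 αb =
      (∑ s, ∑ a1, ∑ a2, b s * π1 a1 * π2 s a2 * G.R s a1 a2) +
        G.γ * ∑ a1, ∑ o, π1 a1 * lineval (αb a1 o) (G.unnormBeliefUpd b π2 a1 o) := by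
  simp only [composedPayoff, actionValue, lineval, unnormBeliefUpd, Finset.mul_sum, Finset.sum_mul,
    mul_add, Finset.sum_add_distrib]
  congr 1
  · refine Finset.sum_congr rfl fun s _ => ?_
    rw [Finset.sum_comm]
    exact Finset.sum_congr rfl fun a1 _ => Finset.sum_congr rfl fun a2 _ => by ring
  · -- reorder the summation indices `s a2 a1 o s'` into `a1 o a2 s s'`
    simp_rw [Finset.sum_comm (s := (univ : Finset A2)) (t := (univ : Finset A1)),
      Finset.sum_comm (s := (univ : Finset S)) (t := (univ : Finset A1)),
      Finset.sum_comm (s := (univ : Finset A2)) (t := (univ : Finset O)),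
      Finset.sum_comm (s := (univ : Finset S)) (t := (univ : Finset O)),
      Finset.sum_comm (s := (univ : Finset S)) (t := (univ : Finset A2))]
    refine Finset.sum_congr rfl fun a1 _ => Finset.sum_congr rfl fun o _ =>
      Finset.sum_congr rfl fun a2 _ => ?_
    rw [Finset.sum_comm]
    exact Finset.sum_congr rfl fun s' _ => Finset.sum_congr rfl fun s _ => by ring

theorem isLUB_composedPayoff (hb : 0 ≤ b) (hπ1 : 0 ≤ π1) (hπ2 : 0 ≤ π2) {Γ : Set (S → ℝ)} (hne : Γ.Nonempty)
    (hbdd : ∀ β ∈ stdSimplex ℝ S, BddAbove ((fun α => lineval α β) '' Γ))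
    {V : (S → ℝ) → ℝ} (hV : ∀ β ∈ stdSimplex ℝ S, V β = sSup ((fun α => lineval α β) '' Γ)) :
    IsLUB (G.composedPayoff b π1 π2 '' univ.pi fun _ => univ.pi fun _ => Γ)
      (G.stageU V b π1 π2) := by
  have hterm : ∀ a1 o, IsLUB
      ((fun α => π1 a1 * lineval α (G.unnormBeliefUpd b π2 a1 o)) '' Γ)
      (G.Pr b π1 π2 a1 o * V (G.beliefUpd b a1 π2 o)) := fun a1 o => by
    have := (isLUB_image_lineval hne hbdd hV
      (G.unnormBeliefUpd_nonneg hb hπ2 a1 o)).mul_left (hπ1 a1)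
    rwa [Set.image_image, ← mul_assoc, ← Pr_eq_mul_sum_unnormBeliefUpd,
      ← beliefUpd_eq_smul] at this
  have hsum := (isLUB_singleton (a := ∑ s, ∑ a1, ∑ a2, b s * π1 a1 * π2 s a2 * G.R s a1 a2)).add
    ((isLUB_image_sum_univ_pi fun a1 => isLUB_image_sum_univ_pi (hterm a1)).mul_left G.γ_pos.le)
  rw [Set.singleton_add, Set.image_image, Set.image_image] at hsum
  simpa only [stageU, composedPayoff_eq] using hsum

theorem isLeast_composedPayoff [Nonempty A2] (hb : 0 ≤ b) (αb : A1 → O → S → ℝ) :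
    IsLeast ((G.composedPayoff b π1 · αb) '' Pi2 S A2) (G.valcomp π1 αb b) := by
  classical
  refine ⟨?_, ?_⟩
  · choose d hd using fun s => Finset.exists_mem_eq_inf' univ_nonempty (G.actionValue π1 αb s)
    refine ⟨fun s => Pi.single (d s) 1, fun s => single_mem_stdSimplex ℝ (d s), ?_⟩
    have hvert : ∀ s, G.valcompVert π1 αb s = G.actionValue π1 αb s (d s) := fun s => (hd s).2
    simp [composedPayoff, valcomp, hvert, Pi.single_apply]
  · rintro _ ⟨π2, hπ2, rfl⟩
    refine Finset.sum_le_sum fun s _ => mul_le_mul_of_nonneg_left ?_ (hb s)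
    calc G.valcompVert π1 αb s = ∑ a2, π2 s a2 * G.valcompVert π1 αb s := by
          rw [← Finset.sum_mul, (hπ2 s).2, one_mul]
      _ ≤ ∑ a2, π2 s a2 * G.actionValue π1 αb s a2 :=
          Finset.sum_le_sum fun a2 _ => mul_le_mul_of_nonneg_left
            (Finset.inf'_le _ (mem_univ a2)) ((hπ2 s).1 a2)

theorem composedPayoff_smul_add_smul_left (αb : A1 → O → S → ℝ) (x y : S → A2 → ℝ) (a c : ℝ) :
    G.composedPayoff b π1 (a • x + c • y) αb =
      a * G.composedPayoff b π1 x αb + c * G.composedPayoff b π1 y αb := by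
  simp only [composedPayoff, Pi.add_apply, Pi.smul_apply, smul_eq_mul, Finset.mul_sum,
    ← Finset.sum_add_distrib]
  exact Finset.sum_congr rfl fun s _ => Finset.sum_congr rfl fun a2 _ => by ring

theorem actionValue_smul_add_smul (x y : A1 → O → S → ℝ) {a c : ℝ} (hac : a + c = 1)
    (s : S) (a2 : A2) :
    G.actionValue π1 (a • x + c • y) s a2 =
      a * G.actionValue π1 x s a2 + c * G.actionValue π1 y s a2 := by
  have hT : ∀ a1, ∑ o, ∑ s', G.T s a1 a2 o s' * (a • x + c • y) a1 o s' =
      a * ∑ o, ∑ s', G.T s a1 a2 o s' * x a1 o s' + c * ∑ o, ∑ s', G.T s a1 a2 o s' * y a1 o s' :=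
    fun a1 => by
      simp only [Pi.add_apply, Pi.smul_apply, smul_eq_mul, Finset.mul_sum, ← Finset.sum_add_distrib]
      exact Finset.sum_congr rfl fun o _ => Finset.sum_congr rfl fun s' _ => by ring
  simp only [actionValue, hT]
  rw [Finset.mul_sum, Finset.mul_sum, ← Finset.sum_add_distrib]
  exact Finset.sum_congr rfl fun a1 _ => by linear_combination (-(π1 a1 * G.R s a1 a2)) * hac

theorem composedPayoff_smul_add_smul_right (x y : A1 → O → S → ℝ) {a c : ℝ} (hac : a + c = 1) :
    G.composedPayoff b π1 π2 (a • x + c • y) =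
      a * G.composedPayoff b π1 π2 x + c * G.composedPayoff b π1 π2 y := by
  simp only [composedPayoff, G.actionValue_smul_add_smul x y hac, Finset.mul_sum,
    ← Finset.sum_add_distrib]
  exact Finset.sum_congr rfl fun s _ => Finset.sum_congr rfl fun a2 _ => by ring

theorem continuous_composedPayoff_left (αb : A1 → O → S → ℝ) :
    Continuous (G.composedPayoff b π1 · αb) := by
  unfold composedPayoff; fun_prop

theorem continuous_composedPayoff_right : Continuous (G.composedPayoff b π1 π2) := by
  unfold composedPayoff actionValue; fun_prop

theorem quasiconvexOn_composedPayoff_left (αb : A1 → O → S → ℝ) :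
    QuasiconvexOn ℝ (Pi2 S A2) (G.composedPayoff b π1 · αb) :=
  ConvexOn.quasiconvexOn ⟨convex_Pi2, fun x _ y _ a c _ _ _ =>
    (G.composedPayoff_smul_add_smul_left αb x y a c).le⟩

theorem quasiconcaveOn_composedPayoff_right {Y : Set (A1 → O → S → ℝ)} (hY : Convex ℝ Y) :
    QuasiconcaveOn ℝ Y (G.composedPayoff b π1 π2) :=
  ConcaveOn.quasiconcaveOn ⟨hY, fun x _ y _ _ _ _ _ hac =>
    (G.composedPayoff_smul_add_smul_right x y hac).ge⟩

theorem valcomp_le_stageU [Nonempty A2] (hb : 0 ≤ b) (hπ1 : 0 ≤ π1)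
    (hπ2 : π2 ∈ Pi2 S A2) {Γ : Set (S → ℝ)} (hne : Γ.Nonempty)
    (hbdd : ∀ β ∈ stdSimplex ℝ S, BddAbove ((fun α => lineval α β) '' Γ))
    {V : (S → ℝ) → ℝ} (hV : ∀ β ∈ stdSimplex ℝ S, V β = sSup ((fun α => lineval α β) '' Γ))
    {αb : A1 → O → S → ℝ} (hαb : αb ∈ univ.pi fun _ => univ.pi fun _ => Γ) :
    G.valcomp π1 αb b ≤ G.stageU V b π1 π2 :=
  ((G.isLeast_composedPayoff hb αb).2 ⟨π2, hπ2, rfl⟩).trans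
    ((G.isLUB_composedPayoff hb hπ1 (fun s => (hπ2 s).1) hne hbdd hV).1 ⟨αb, hαb, rfl⟩)

theorem isLUB_valcomp_iInf_stageU [Nonempty A2] (hb : 0 ≤ b) (hπ1 : 0 ≤ π1) {Γ : Set (S → ℝ)} (hne : Γ.Nonempty) (hΓconv : Convex ℝ Γ)
    (hbdd : ∀ β ∈ stdSimplex ℝ S, BddAbove ((fun α => lineval α β) '' Γ))
    {V : (S → ℝ) → ℝ} (hV : ∀ β ∈ stdSimplex ℝ S, V β = sSup ((fun α => lineval α β) '' Γ)) :
    IsLUB ((G.valcomp π1 · b) '' univ.pi fun _ => univ.pi fun _ => Γ)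
      (⨅ π2 : Pi2 S A2, G.stageU V b π1 π2) := by
  set Y : Set (A1 → O → S → ℝ) := univ.pi fun _ => univ.pi fun _ => Γ
  have hα0Y : (fun _ _ => hne.some) ∈ Y := by simp [Y, hne.some_mem]
  obtain ⟨π2₀, hπ2₀⟩ := nonempty_Pi2 (S := S) (A2 := A2)
  have : Nonempty (Pi2 S A2) := ⟨⟨π2₀, hπ2₀⟩⟩
  have hinf : IsGLB (G.stageU V b π1 '' Pi2 S A2) (⨅ π2 : Pi2 S A2, G.stageU V b π1 π2) := by
    rw [Set.image_eq_range]
    exact isGLB_ciInf ⟨_, forall_mem_range.2 fun π2 =>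
      G.valcomp_le_stageU hb hπ1 π2.2 hne hbdd hV hα0Y⟩
  have hsup := isLUB_csSup (⟨_, _, hα0Y, rfl⟩ : ((G.valcomp π1 · b) '' Y).Nonempty)
    ⟨_, forall_mem_image.2 fun αb hαb => G.valcomp_le_stageU hb hπ1 hπ2₀ hne hbdd hV hαb⟩
  have hYconv : Convex ℝ Y := convex_pi fun _ _ => convex_pi fun _ _ => hΓconv
  rwa [Sion.minimax (f := G.composedPayoff b π1) ⟨π2₀, hπ2₀⟩ isCompact_Pi2
    (fun αb _ => (G.continuous_composedPayoff_left αb).lowerSemicontinuous.lowerSemicontinuousOn _)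
    (fun αb _ => G.quasiconvexOn_composedPayoff_left αb) hYconv
    (fun π2 _ => G.continuous_composedPayoff_right.upperSemicontinuous.upperSemicontinuousOn _)
    (fun π2 _ => G.quasiconcaveOn_composedPayoff_right hYconv) convex_Pi2
    _ (fun π2 hπ2 => G.isLUB_composedPayoff hb hπ1 (fun s => (hπ2 s).1) hne hbdd hV) _ hinf
    _ (fun αb _ => (G.isLeast_composedPayoff hb αb).isGLB) _ hsup]

theorem valcomp_le [Nonempty A2] (hb : b ∈ stdSimplex ℝ S) (hπ1 : π1 ∈ stdSimplex ℝ A1)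
    {M C : ℝ} (hR : ∀ s a1 a2, G.R s a1 a2 ≤ M) {αb : A1 → O → S → ℝ}
    (hα : ∀ a1 o s, αb a1 o s ≤ C) :
    G.valcomp π1 αb b ≤ M + G.γ * C := by
  have hT : ∀ s a1 a2, ∑ o, ∑ s', G.T s a1 a2 o s' * αb a1 o s' ≤ C := fun s a1 a2 =>
    calc ∑ o, ∑ s', G.T s a1 a2 o s' * αb a1 o s' ≤ ∑ o, ∑ s', G.T s a1 a2 o s' * C :=
          Finset.sum_le_sum fun o _ => Finset.sum_le_sum fun s' _ =>
            mul_le_mul_of_nonneg_left (hα a1 o s') (G.T_nonneg s a1 a2 o s')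
      _ = C := by simp_rw [← Finset.sum_mul, G.T_sum, one_mul]
  have hvert : ∀ s, G.valcompVert π1 αb s ≤ M + G.γ * C := fun s =>
    let a2 := Classical.arbitrary A2
    calc G.valcompVert π1 αb s ≤ G.actionValue π1 αb s a2 := Finset.inf'_le _ (mem_univ a2)
      _ ≤ ∑ a1, π1 a1 * (M + G.γ * C) :=
          Finset.sum_le_sum fun a1 _ => mul_le_mul_of_nonneg_left
            (add_le_add (hR s a1 a2) (mul_le_mul_of_nonneg_left (hT s a1 a2) G.γ_pos.le))
            (hπ1.1 a1)
      _ = M + G.γ * C := by rw [← Finset.sum_mul, hπ1.2, one_mul]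
  calc G.valcomp π1 αb b ≤ ∑ s, b s * (M + G.γ * C) :=
        Finset.sum_le_sum fun s _ => mul_le_mul_of_nonneg_left (hvert s) (hb.1 s)
    _ = M + G.γ * C := by rw [← Finset.sum_mul, hb.2, one_mul]

end OSPOSG

namespace OSPOSG

variable {S A1 A2 O : Type*} [Fintype S] [Fintype A1] [Fintype A2] [Fintype O]
  [Nonempty S] [Nonempty A1] [Nonempty A2] [Nonempty O]

/-- The max-composition form of the Bellman operator coincides with its maximin form:
`sup_{π1} sup_{ᾱ ∈ Γ^{A1×O}} valcomp(π1,ᾱ)(b) = sup_{π1} inf_{π2} u^{V,b}(π1,π2)`. -/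
theorem maxComposition_eq_maximin (G : OSPOSG S A1 A2 O)
    (Γ : Set (S → ℝ)) (hne : Γ.Nonempty) (hΓconv : Convex ℝ Γ)
    (hbdd : ∀ b ∈ stdSimplex ℝ S, BddAbove ((fun α => lineval α b) '' Γ))
    (V : (S → ℝ) → ℝ)
    (hV : ∀ b ∈ stdSimplex ℝ S, V b = sSup ((fun α => lineval α b) '' Γ))
    (b : S → ℝ) (hb : b ∈ stdSimplex ℝ S) :
    sSup {y : ℝ | ∃ π1 ∈ stdSimplex ℝ A1, ∃ αb : A1 → O → S → ℝ,
        (∀ a1 o, αb a1 o ∈ Γ) ∧ y = G.valcomp π1 αb b} =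
      ⨆ π1 : stdSimplex ℝ A1, ⨅ π2 : Pi2 S A2, G.stageU V b π1.1 π2.1 := by
  set Y : Set (A1 → O → S → ℝ) := univ.pi fun _ => univ.pi fun _ => Γ
  have hlub : ∀ π1 : stdSimplex ℝ A1, IsLUB ((G.valcomp π1.1 · b) '' Y)
      (⨅ π2 : Pi2 S A2, G.stageU V b π1.1 π2.1) := fun π1 =>
    G.isLUB_valcomp_iInf_stageU hb.1 π1.2.1 hne hΓconv hbdd hV
  have hset : {y : ℝ | ∃ π1 ∈ stdSimplex ℝ A1, ∃ αb : A1 → O → S → ℝ,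
      (∀ a1 o, αb a1 o ∈ Γ) ∧ y = G.valcomp π1 αb b} =
        ⋃ π1 : stdSimplex ℝ A1, (G.valcomp π1.1 · b) '' Y := by
    ext y; simp [Y, eq_comm]
  obtain ⟨M, hM⟩ := (Set.finite_range fun x : S × A1 × A2 => G.R x.1 x.2.1 x.2.2).bddAbove
  obtain ⟨C, hC⟩ := exists_forall_apply_le_of_bddAbove_lineval hbdd
  have hbddAbove : BddAbove (range fun π1 : stdSimplex ℝ A1 =>
      ⨅ π2 : Pi2 S A2, G.stageU V b π1.1 π2.1) :=
    ⟨M + G.γ * C, forall_mem_range.2 fun π1 => (hlub π1).2 <| forall_mem_image.2 fun αb hαb =>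
      G.valcomp_le hb π1.2 (fun s a1 a2 => hM ⟨(s, a1, a2), rfl⟩)
        fun a1 o => hC _ (mem_univ_pi.1 (mem_univ_pi.1 hαb a1) o)⟩
  rw [hset]
  obtain ⟨α0, hα0⟩ := hne
  exact ((isLUB_iUnion_iff_of_isLUB hlub _).1 (isLUB_ciSup hbddAbove)).csSup_eq
    ⟨_, mem_iUnion.2 ⟨Classical.arbitrary _, _, fun _ _ _ _ => hα0, rfl⟩⟩

end OSPOSG
end
end

section
/- Let G be a one-sided POSG and let V, W : Δ(S) → ℝ be convex continuous functions. Then sup_{b ∈ Δ(S)} |[HV](b) − [HW](b)| ≤ γ · sup_{b ∈ Δ(S)} |V(b) − W(b)|, where H is the minimax operator; that is, H is a contraction with factor γ in the supremum norm on the space of convex continuous functions on Δ(S). -/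
/-! The difference of the stage utilities of `V` and `W` is `γ` times the expectation of `V - W`
at the updated beliefs, weighted by the probabilities `Pr[a1, o]`. These form a distribution, and
every belief update of positive probability lies in the simplex, so the expectation is bounded by
`sup |V - W|`. Two sup–inf values of functions that differ uniformly by at most `c` differ by at
most `c`; continuity on the compact simplex makes all the suprema and infima involved finite. -/

open scoped BigOperators

noncomputable section

theorem abs_sum_mul_le_of_mem_stdSimplex {ι : Type*} [Fintype ι] {w x : ι → ℝ} {M : ℝ}
    (hw : w ∈ stdSimplex ℝ ι) (hx : ∀ i, w i ≠ 0 → |x i| ≤ M) : |∑ i, w i * x i| ≤ M :=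
  calc |∑ i, w i * x i| ≤ ∑ i, w i * |x i| := by
        simpa only [abs_mul, abs_of_nonneg (hw.1 _)] using
          Finset.abs_sum_le_sum_abs (fun i => w i * x i) Finset.univ
    _ ≤ ∑ i, w i * M := by
        refine Finset.sum_le_sum fun i _ => ?_
        rcases eq_or_ne (w i) 0 with h | h
        · simp [h]
        · exact mul_le_mul_of_nonneg_left (hx i h) (hw.1 i)
    _ = M := by rw [← Finset.sum_mul, hw.2, one_mul]

theorem ciSup_ciInf_le_ciSup_ciInf_add {ι κ : Type*} [Nonempty ι] [Nonempty κ]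
    {f g : ι → κ → ℝ} {c : ℝ}
    (hf : ∀ i, BddBelow (Set.range (f i))) (hg : BddAbove (Set.range fun i => ⨅ j, g i j))
    (hfg : ∀ i j, f i j ≤ g i j + c) :
    ⨆ i, ⨅ j, f i j ≤ (⨆ i, ⨅ j, g i j) + c := by
  refine ciSup_le fun i => ?_
  have : (⨅ j, f i j) - c ≤ ⨅ j, g i j := by
    refine le_ciInf fun j => ?_
    linarith [ciInf_le (hf i) j, hfg i j]
  linarith [le_ciSup hg i]

theorem abs_ciSup_ciInf_sub_ciSup_ciInf_le {ι κ : Type*} [Nonempty ι] [Nonempty κ]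
    {f g : ι → κ → ℝ} {c C : ℝ} (hg : ∀ i j, |g i j| ≤ C)
    (hfg : ∀ i j, |f i j - g i j| ≤ c) :
    |(⨆ i, ⨅ j, f i j) - ⨆ i, ⨅ j, g i j| ≤ c := by
  have hf : ∀ i j, |f i j| ≤ C + c := fun i j => by
    have := abs_sub_abs_le_abs_sub (f i j) (g i j); linarith [hg i j, hfg i j]
  have bddBelow {h : ι → κ → ℝ} {C : ℝ} (hC : ∀ i j, |h i j| ≤ C) (i : ι) :
      BddBelow (Set.range (h i)) :=
    ⟨-C, Set.forall_mem_range.2 fun j => (abs_le.1 (hC i j)).1⟩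
  have bddAbove {h : ι → κ → ℝ} {C : ℝ} (hC : ∀ i j, |h i j| ≤ C) :
      BddAbove (Set.range fun i => ⨅ j, h i j) :=
    ⟨C, Set.forall_mem_range.2 fun i =>
      (ciInf_le (bddBelow hC i) (Classical.arbitrary κ)).trans (abs_le.1 (hC i _)).2⟩
  rw [abs_sub_le_iff]
  constructor
  · linarith [ciSup_ciInf_le_ciSup_ciInf_add (bddBelow hf) (bddAbove hg)
      fun i j => by linarith [(abs_le.1 (hfg i j)).2]]
  · linarith [ciSup_ciInf_le_ciSup_ciInf_add (bddBelow hg) (bddAbove hf)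
      fun i j => by linarith [(abs_le.1 (hfg i j)).1]]

namespace OSPOSG

variable {S A1 A2 O : Type*} [Fintype S] [Fintype A1] [Fintype A2] [Fintype O]
  (G : OSPOSG S A1 A2 O) {b : S → ℝ} {π1 : A1 → ℝ} {π2 : S → A2 → ℝ}

instance [Nonempty A2] : Nonempty (Pi2 S A2) :=
  let p := Classical.arbitrary (stdSimplex ℝ A2)
  ⟨⟨fun _ => p, fun _ => p.2⟩⟩

theorem Pr_eq_mul (a1 : A1) (o : O) :
    G.Pr b π1 π2 a1 o = π1 a1 * ∑ s', ∑ s, ∑ a2, b s * π2 s a2 * G.T s a1 a2 o s' := by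
  simp only [Pr, Finset.mul_sum]
  rw [Finset.sum_congr rfl fun s _ => Finset.sum_comm, Finset.sum_comm]
  simp only [mul_assoc, mul_left_comm (π1 a1)]

theorem sum_Pr_eq (hb : b ∈ stdSimplex ℝ S) (h2 : π2 ∈ Pi2 S A2) (a1 : A1) :
    ∑ o, G.Pr b π1 π2 a1 o = π1 a1 := by
  calc ∑ o, G.Pr b π1 π2 a1 o
      = ∑ s, ∑ a2, b s * π1 a1 * π2 s a2 * ∑ o, ∑ s', G.T s a1 a2 o s' := by
        simp only [Pr, Finset.mul_sum]
        rw [Finset.sum_comm]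
        exact Finset.sum_congr rfl fun s _ => Finset.sum_comm
    _ = π1 a1 := by
        simp only [G.T_sum, mul_one, ← Finset.mul_sum, (h2 _).2, ← Finset.sum_mul, hb.2,
          one_mul]

theorem Pr_mem_stdSimplex (hb : b ∈ stdSimplex ℝ S) (h1 : π1 ∈ stdSimplex ℝ A1)
    (h2 : π2 ∈ Pi2 S A2) :
    (fun x : A1 × O => G.Pr b π1 π2 x.1 x.2) ∈ stdSimplex ℝ (A1 × O) :=
  ⟨fun x => Finset.sum_nonneg fun s _ => Finset.sum_nonneg fun a2 _ => Finset.sum_nonneg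
      fun s' _ => by
        have := hb.1 s; have := h1.1 x.1; have := (h2 s).1 a2
        have := G.T_nonneg s x.1 a2 x.2 s'
        positivity,
    by rw [Fintype.sum_prod_type']; simp only [G.sum_Pr_eq hb h2, h1.2]⟩

theorem beliefUpd_mem_stdSimplex (hb : b ∈ stdSimplex ℝ S) (h2 : π2 ∈ Pi2 S A2)
    {a1 : A1} {o : O} (hPr : G.Pr b π1 π2 a1 o ≠ 0) : G.beliefUpd b a1 π2 o ∈ stdSimplex ℝ S := by
  have hnum : ∀ s', 0 ≤ ∑ s, ∑ a2, b s * π2 s a2 * G.T s a1 a2 o s' := fun s' =>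
    Finset.sum_nonneg fun s _ => Finset.sum_nonneg fun a2 _ => by
      have := hb.1 s; have := (h2 s).1 a2; have := G.T_nonneg s a1 a2 o s'
      positivity
  have hZ : 0 < ∑ s', ∑ s, ∑ a2, b s * π2 s a2 * G.T s a1 a2 o s' :=
    (Finset.sum_nonneg fun s' _ => hnum s').lt_of_ne fun h =>
      hPr (by rw [Pr_eq_mul, ← h, mul_zero])
  refine ⟨fun s' => div_nonneg (hnum s') hZ.le, ?_⟩
  simp only [beliefUpd]
  rw [← Finset.sum_div, div_self hZ.ne']

theorem abs_expect_beliefUpd_le (hb : b ∈ stdSimplex ℝ S) (h1 : π1 ∈ stdSimplex ℝ A1)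
    (h2 : π2 ∈ Pi2 S A2) {f : (S → ℝ) → ℝ} {M : ℝ} (hf : ∀ p ∈ stdSimplex ℝ S, |f p| ≤ M) :
    |∑ a1, ∑ o, G.Pr b π1 π2 a1 o * f (G.beliefUpd b a1 π2 o)| ≤ M := by
  rw [← Fintype.sum_prod_type']
  exact abs_sum_mul_le_of_mem_stdSimplex (G.Pr_mem_stdSimplex hb h1 h2)
    fun x hx => hf _ (G.beliefUpd_mem_stdSimplex hb h2 hx)

theorem stageU_sub_stageU (V W : (S → ℝ) → ℝ) :
    G.stageU V b π1 π2 - G.stageU W b π1 π2 =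
      G.γ * ∑ a1, ∑ o, G.Pr b π1 π2 a1 o * (V - W) (G.beliefUpd b a1 π2 o) := by
  simp only [stageU, Pi.sub_apply, mul_sub, Finset.sum_sub_distrib]
  ring

theorem abs_stageU_sub_stageU_le (hb : b ∈ stdSimplex ℝ S) (h1 : π1 ∈ stdSimplex ℝ A1)
    (h2 : π2 ∈ Pi2 S A2) {V W : (S → ℝ) → ℝ} {M : ℝ}
    (hVW : ∀ p ∈ stdSimplex ℝ S, |V p - W p| ≤ M) :
    |G.stageU V b π1 π2 - G.stageU W b π1 π2| ≤ G.γ * M := by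
  rw [stageU_sub_stageU, abs_mul, abs_of_pos G.γ_pos]
  exact mul_le_mul_of_nonneg_left (G.abs_expect_beliefUpd_le hb h1 h2 hVW) G.γ_pos.le

theorem exists_abs_stageU_le {V : (S → ℝ) → ℝ} {C : ℝ}
    (hV : ∀ p ∈ stdSimplex ℝ S, |V p| ≤ C) :
    ∃ K, ∀ b ∈ stdSimplex ℝ S, ∀ π1 ∈ stdSimplex ℝ A1, ∀ π2 ∈ Pi2 S A2,
      |G.stageU V b π1 π2| ≤ K := by
  obtain ⟨CR, hCR⟩ := Finite.exists_le fun x : S × A1 × A2 => |G.R x.1 x.2.1 x.2.2|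
  refine ⟨CR + G.γ * C, fun b hb π1 h1 π2 h2 => ?_⟩
  have hreward : |∑ s, ∑ a1, ∑ a2, b s * π1 a1 * π2 s a2 * G.R s a1 a2| ≤ CR := by
    simp only [mul_assoc, ← Finset.mul_sum]
    exact abs_sum_mul_le_of_mem_stdSimplex hb fun s _ => abs_sum_mul_le_of_mem_stdSimplex h1
      fun a1 _ => abs_sum_mul_le_of_mem_stdSimplex (h2 s) fun a2 _ => hCR (s, a1, a2)
  have hfuture := G.abs_expect_beliefUpd_le hb h1 h2 hV
  rw [stageU]
  refine (abs_add_le _ _).trans (add_le_add hreward ?_)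
  rw [abs_mul, abs_of_pos G.γ_pos]
  exact mul_le_mul_of_nonneg_left hfuture G.γ_pos.le

end OSPOSG

namespace OSPOSG

variable {S A1 A2 O : Type*} [Fintype S] [Fintype A1] [Fintype A2] [Fintype O]
  [Nonempty S] [Nonempty A1] [Nonempty A2] [Nonempty O]

theorem Hop_contraction_general (G : OSPOSG S A1 A2 O) (V W : (S → ℝ) → ℝ)
    (hVcont : ContinuousOn V (stdSimplex ℝ S))
    (hWcont : ContinuousOn W (stdSimplex ℝ S)) :
    (⨆ b : stdSimplex ℝ S, |G.Hop V b.1 - G.Hop W b.1|) ≤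
      G.γ * ⨆ b : stdSimplex ℝ S, |V b.1 - W b.1| := by
  obtain ⟨C, hC⟩ := (isCompact_stdSimplex ℝ S).exists_bound_of_continuousOn hWcont
  obtain ⟨D, hD⟩ :=
    (isCompact_stdSimplex ℝ S).exists_bound_of_continuousOn (hVcont.sub hWcont)
  have hM : ∀ p ∈ stdSimplex ℝ S, |V p - W p| ≤ ⨆ b : stdSimplex ℝ S, |V b.1 - W b.1| :=
    fun p hp => le_ciSup ⟨D, Set.forall_mem_range.2 fun b => hD b.1 b.2⟩
      (⟨p, hp⟩ : stdSimplex ℝ S)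
  obtain ⟨K, hK⟩ := G.exists_abs_stageU_le hC
  exact ciSup_le fun b => abs_ciSup_ciInf_sub_ciSup_ciInf_le
    (fun π1 π2 => hK b.1 b.2 π1.1 π1.2 π2.1 π2.2)
    fun π1 π2 => G.abs_stageU_sub_stageU_le b.2 π1.2 π2.2 hM

/-- The Bellman operator `H` is a `γ`-contraction in the supremum norm on the space of
convex continuous functions on the simplex. -/
theorem Hop_contraction (G : OSPOSG S A1 A2 O) (V W : (S → ℝ) → ℝ)
    (hVconv : ConvexOn ℝ (stdSimplex ℝ S) V) (hVcont : ContinuousOn V (stdSimplex ℝ S))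
    (hWconv : ConvexOn ℝ (stdSimplex ℝ S) W) (hWcont : ContinuousOn W (stdSimplex ℝ S)) :
    (⨆ b : stdSimplex ℝ S, |G.Hop V b.1 - G.Hop W b.1|) ≤
      G.γ * ⨆ b : stdSimplex ℝ S, |V b.1 - W b.1| :=
  Hop_contraction_general G V W hVcont hWcont

end OSPOSG
end
end
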